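/- arXiv:1212.1301 — 2 statements merged into one kernel-verified Lean document; each statement's English description precedes it below -/
import Mathlib

section
/- For spatially independent solutions of the Einstein–Euler ODE system, the energy E := (1/(2a))(W₊² + W₋²) + (1/(8at²))(V₊² + V₋²) + (μ̃/a)(1+k²v²)/(1−v²) satisfies E'(t) = −(1/t)[ (1/(2a))(W₊+W₋)² + (1/(8at²))(V₊−V₋)² + (μ̃/a)(1+k²)/(1−v²) ]; in particular E is non-increasing when t > 0 and non-decreasing when t < 0. -/
/-! Each of the three parts of the energy (the `W±` part, the `V±` part and the fluid part) is
rewritten, away from `t = 0`, through the rescaled quantities `a⁻¹ t W±`, `a⁻¹ t⁻¹ V±` and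
`a⁻¹ t μ (1 + k²v²)/(1 - v²)` whose derivatives the system prescribes, e.g.
`(W₊² + W₋²)/(2a) = (a/(2t²)) ((a⁻¹ t W₊)² + (a⁻¹ t W₋)²)`. Differentiating each part along a
solution gives its dissipative term plus exchange terms: the wave coupling
`(W₊ + W₋) V₊ V₋/(2at²)` and the matter terms coming from `a' = -a t μ (1 - k²)` and from the
fluid source cancel in the sum. -/

open Filter Topology

section EnergyPieces

variable {k t : ℝ} {Wp Wm Vp Vm a μ v : ℝ → ℝ}

theorem hasDerivAt_geometricEnergyW (ht : t ≠ 0) (hat : a t ≠ 0)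
    (had : HasDerivAt a (-(a t) * t * μ t * (1 - k^2)) t)
    (hWp : HasDerivAt (fun s => (a s)⁻¹ * s * Wp s)
      ((Wp t - Wm t) / (2 * a t) + (Vp t * Vm t) / (2 * a t * t)
        + (t * μ t / (2 * a t)) * (1 - k^2)) t)
    (hWm : HasDerivAt (fun s => (a s)⁻¹ * s * Wm s)
      (-((Wp t - Wm t) / (2 * a t)) + (Vp t * Vm t) / (2 * a t * t)
        + (t * μ t / (2 * a t)) * (1 - k^2)) t) :
    HasDerivAt (fun s => (1 / (2 * a s)) * ((Wp s)^2 + (Wm s)^2))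
      (-(1/t) * ((1 / (2 * a t)) * (Wp t + Wm t)^2)
        + (Wp t + Wm t) * Vp t * Vm t / (2 * a t * t^2)
        + μ t * (1 - k^2) / (2 * a t) * (Wp t + Wm t - t * ((Wp t)^2 + (Wm t)^2))) t := by
  have hrescaled : (fun s => (1 / (2 * a s)) * ((Wp s)^2 + (Wm s)^2)) =ᶠ[𝓝 t]
      fun s => a s / 2 * (((a s)⁻¹ * s * Wp s)^2 + ((a s)⁻¹ * s * Wm s)^2) * (s⁻¹)^2 := by
    filter_upwards [eventually_ne_nhds ht] with s hs
    field_simp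
  refine (((had.div_const 2).mul ((hWp.pow 2).add (hWm.pow 2))).mul
    ((hasDerivAt_inv ht).pow 2)).congr_of_eventuallyEq hrescaled |>.congr_deriv ?_
  norm_num only [Pi.add_apply, Pi.mul_apply, Pi.pow_apply, pow_one]
  field_simp
  ring

theorem hasDerivAt_geometricEnergyV (ht : t ≠ 0) (hat : a t ≠ 0)
    (had : HasDerivAt a (-(a t) * t * μ t * (1 - k^2)) t)
    (hVp : HasDerivAt (fun s => (a s)⁻¹ * s⁻¹ * Vp s)
      (-((Vp t - Vm t) / (2 * a t * t^2)) - (2 / (a t * t)) * Wp t * Vm t) t)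
    (hVm : HasDerivAt (fun s => (a s)⁻¹ * s⁻¹ * Vm s)
      ((Vp t - Vm t) / (2 * a t * t^2) - (2 / (a t * t)) * Wm t * Vp t) t) :
    HasDerivAt (fun s => (1 / (8 * a s * s^2)) * ((Vp s)^2 + (Vm s)^2))
      (-(1/t) * ((1 / (8 * a t * t^2)) * (Vp t - Vm t)^2)
        - (Wp t + Wm t) * Vp t * Vm t / (2 * a t * t^2)
        - μ t * (1 - k^2) * ((Vp t)^2 + (Vm t)^2) / (8 * a t * t)) t := by
  have hrescaled : (fun s => (1 / (8 * a s * s^2)) * ((Vp s)^2 + (Vm s)^2)) =ᶠ[𝓝 t]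
      fun s => a s / 8 * (((a s)⁻¹ * s⁻¹ * Vp s)^2 + ((a s)⁻¹ * s⁻¹ * Vm s)^2) := by
    filter_upwards [eventually_ne_nhds ht] with s hs
    field_simp
  refine ((had.div_const 8).mul ((hVp.pow 2).add (hVm.pow 2))).congr_of_eventuallyEq hrescaled
    |>.congr_deriv ?_
  norm_num only [Pi.add_apply, Pi.mul_apply, Pi.pow_apply, pow_one]
  field_simp
  ring

theorem hasDerivAt_fluidEnergy (ht : t ≠ 0) (hat : a t ≠ 0) (hk : 1 - k^2 ≠ 0)
    (hvt : 1 - (v t)^2 ≠ 0)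
    (hG : HasDerivAt (fun s => (a s)⁻¹ * s * μ s * (1 + k^2 * (v s)^2) / (1 - (v s)^2))
      ((a t)⁻¹ * t * μ t * (1 - k^2) *
        (-(k^2 / ((1 - k^2) * t)) - (1/2) * (Wp t + Wm t)
          + (t/2) * ((Wp t)^2 + (Wm t)^2) + (1/(8*t)) * ((Vp t)^2 + (Vm t)^2))) t) :
    HasDerivAt (fun s => (μ s / a s) * (1 + k^2 * (v s)^2) / (1 - (v s)^2))
      (-(1/t) * ((μ t / a t) * (1 + k^2) / (1 - (v t)^2))
        - μ t * (1 - k^2) / (2 * a t) * (Wp t + Wm t - t * ((Wp t)^2 + (Wm t)^2))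
        + μ t * (1 - k^2) * ((Vp t)^2 + (Vm t)^2) / (8 * a t * t)) t := by
  have hrescaled : (fun s => (μ s / a s) * (1 + k^2 * (v s)^2) / (1 - (v s)^2)) =ᶠ[𝓝 t]
      fun s => s⁻¹ * ((a s)⁻¹ * s * μ s * (1 + k^2 * (v s)^2) / (1 - (v s)^2)) := by
    filter_upwards [eventually_ne_nhds ht] with s hs
    field_simp
  refine ((hasDerivAt_inv ht).mul hG).congr_of_eventuallyEq hrescaled |>.congr_deriv ?_
  field_simp
  ring

end EnergyPieces

theorem energy_identity_homogeneous_solutions_general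
    (k : ℝ) (hk0 : 0 < k) (hk1 : k < 1)
    (I : Set ℝ) (hI0 : (0 : ℝ) ∉ I)
    (Wp Wm Vp Vm a μ v : ℝ → ℝ)
    (ha : ∀ t ∈ I, 0 < a t)
    (hv : ∀ t ∈ I, |v t| < 1)
    (hWp_diff : ∀ t ∈ I, DifferentiableAt ℝ Wp t)
    (hWm_diff : ∀ t ∈ I, DifferentiableAt ℝ Wm t)
    (hVp_diff : ∀ t ∈ I, DifferentiableAt ℝ Vp t)
    (hVm_diff : ∀ t ∈ I, DifferentiableAt ℝ Vm t)
    (ha_diff : ∀ t ∈ I, DifferentiableAt ℝ a t)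
    (hμ_diff : ∀ t ∈ I, DifferentiableAt ℝ μ t)
    (hv_diff : ∀ t ∈ I, DifferentiableAt ℝ v t)
    -- geometric evolution equations
    (hWp : ∀ t ∈ I, deriv (fun s => (a s)⁻¹ * s * Wp s) t =
      (Wp t - Wm t) / (2 * a t) + (Vp t * Vm t) / (2 * a t * t)
        + (t * μ t / (2 * a t)) * (1 - k^2))
    (hWm : ∀ t ∈ I, deriv (fun s => (a s)⁻¹ * s * Wm s) t =
      -((Wp t - Wm t) / (2 * a t)) + (Vp t * Vm t) / (2 * a t * t)
        + (t * μ t / (2 * a t)) * (1 - k^2))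
    (hVp : ∀ t ∈ I, deriv (fun s => (a s)⁻¹ * s⁻¹ * Vp s) t =
      -((Vp t - Vm t) / (2 * a t * t^2)) - (2 / (a t * t)) * Wp t * Vm t)
    (hVm : ∀ t ∈ I, deriv (fun s => (a s)⁻¹ * s⁻¹ * Vm s) t =
      (Vp t - Vm t) / (2 * a t * t^2) - (2 / (a t * t)) * Wm t * Vp t)
    (ha' : ∀ t ∈ I, deriv a t = -(a t) * t * μ t * (1 - k^2))
    -- fluid evolution equations
    (hfluid0 : ∀ t ∈ I, deriv
        (fun s => (a s)⁻¹ * s * μ s * (1 + k^2 * (v s)^2) / (1 - (v s)^2)) t =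
      (a t)⁻¹ * t * μ t * (1 - k^2) *
        (-(k^2 / ((1 - k^2) * t)) - (1/2) * (Wp t + Wm t)
          + (t/2) * ((Wp t)^2 + (Wm t)^2) + (1/(8*t)) * ((Vp t)^2 + (Vm t)^2))) :
    ∀ t ∈ I, deriv
        (fun s => (1 / (2 * a s)) * ((Wp s)^2 + (Wm s)^2)
          + (1 / (8 * a s * s^2)) * ((Vp s)^2 + (Vm s)^2)
          + (μ s / a s) * (1 + k^2 * (v s)^2) / (1 - (v s)^2)) t =
      -(1/t) * ((1 / (2 * a t)) * (Wp t + Wm t)^2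
          + (1 / (8 * a t * t^2)) * (Vp t - Vm t)^2
          + (μ t / a t) * (1 + k^2) / (1 - (v t)^2)) := by
  intro t ht
  have ht0 : t ≠ 0 := ne_of_mem_of_not_mem ht hI0
  have hat : a t ≠ 0 := (ha t ht).ne'
  have hk : 1 - k^2 ≠ 0 := (sub_pos.2 (pow_lt_one₀ hk0.le hk1 two_ne_zero)).ne'
  have hvt : 1 - (v t)^2 ≠ 0 := (sub_pos.2 ((sq_lt_one_iff_abs_lt_one _).2 (hv t ht))).ne'
  have hainv := (ha_diff t ht).inv hat
  have hFp := hWp t ht ▸ ((hainv.mul differentiableAt_id).mul (hWp_diff t ht)).hasDerivAt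
  have hFm := hWm t ht ▸ ((hainv.mul differentiableAt_id).mul (hWm_diff t ht)).hasDerivAt
  have hQp := hVp t ht ▸ ((hainv.mul (differentiableAt_inv ht0)).mul (hVp_diff t ht)).hasDerivAt
  have hQm := hVm t ht ▸ ((hainv.mul (differentiableAt_inv ht0)).mul (hVm_diff t ht)).hasDerivAt
  have hv2 := (hv_diff t ht).pow 2
  have hG := hfluid0 t ht ▸ ((((hainv.mul differentiableAt_id).mul (hμ_diff t ht)).mul
    ((differentiableAt_const _).add ((differentiableAt_const _).mul hv2))).div
      ((differentiableAt_const _).sub hv2) hvt).hasDerivAt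
  have had := ha' t ht ▸ (ha_diff t ht).hasDerivAt
  refine (((hasDerivAt_geometricEnergyW ht0 hat had hFp hFm).add
    (hasDerivAt_geometricEnergyV ht0 hat had hQp hQm)).add
    (hasDerivAt_fluidEnergy ht0 hat hk hvt hG)).deriv.trans ?_
  ring

/-- energy identity for spatially independent solutions of the
Einstein–Euler ODE system. -/
theorem energy_identity_homogeneous_solutions
    (k : ℝ) (hk0 : 0 < k) (hk1 : k < 1)
    (I : Set ℝ) (hI : IsOpen I) (hI0 : (0 : ℝ) ∉ I)
    (Wp Wm Vp Vm a μ v : ℝ → ℝ)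
    (ha : ∀ t ∈ I, 0 < a t) (hμ : ∀ t ∈ I, 0 < μ t)
    (hv : ∀ t ∈ I, |v t| < 1)
    (hWp_diff : ∀ t ∈ I, DifferentiableAt ℝ Wp t)
    (hWm_diff : ∀ t ∈ I, DifferentiableAt ℝ Wm t)
    (hVp_diff : ∀ t ∈ I, DifferentiableAt ℝ Vp t)
    (hVm_diff : ∀ t ∈ I, DifferentiableAt ℝ Vm t)
    (ha_diff : ∀ t ∈ I, DifferentiableAt ℝ a t)
    (hμ_diff : ∀ t ∈ I, DifferentiableAt ℝ μ t)
    (hv_diff : ∀ t ∈ I, DifferentiableAt ℝ v t)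
    -- geometric evolution equations
    (hWp : ∀ t ∈ I, deriv (fun s => (a s)⁻¹ * s * Wp s) t =
      (Wp t - Wm t) / (2 * a t) + (Vp t * Vm t) / (2 * a t * t)
        + (t * μ t / (2 * a t)) * (1 - k^2))
    (hWm : ∀ t ∈ I, deriv (fun s => (a s)⁻¹ * s * Wm s) t =
      -((Wp t - Wm t) / (2 * a t)) + (Vp t * Vm t) / (2 * a t * t)
        + (t * μ t / (2 * a t)) * (1 - k^2))
    (hVp : ∀ t ∈ I, deriv (fun s => (a s)⁻¹ * s⁻¹ * Vp s) t =
      -((Vp t - Vm t) / (2 * a t * t^2)) - (2 / (a t * t)) * Wp t * Vm t)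
    (hVm : ∀ t ∈ I, deriv (fun s => (a s)⁻¹ * s⁻¹ * Vm s) t =
      (Vp t - Vm t) / (2 * a t * t^2) - (2 / (a t * t)) * Wm t * Vp t)
    (ha' : ∀ t ∈ I, deriv a t = -(a t) * t * μ t * (1 - k^2))
    -- fluid evolution equations
    (hfluid0 : ∀ t ∈ I, deriv
        (fun s => (a s)⁻¹ * s * μ s * (1 + k^2 * (v s)^2) / (1 - (v s)^2)) t =
      (a t)⁻¹ * t * μ t * (1 - k^2) *
        (-(k^2 / ((1 - k^2) * t)) - (1/2) * (Wp t + Wm t)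
          + (t/2) * ((Wp t)^2 + (Wm t)^2) + (1/(8*t)) * ((Vp t)^2 + (Vm t)^2)))
    (hfluid1 : ∀ t ∈ I, deriv
        (fun s => (a s)⁻¹ * s * μ s * (1 + k^2) * v s / (1 - (v s)^2)) t =
      (a t)⁻¹ * t * μ t * (1 - k^2) *
        (-(1/2) * (Wp t - Wm t)
          + (t/2) * ((Wp t)^2 - (Wm t)^2) + (1/(8*t)) * ((Vp t)^2 - (Vm t)^2))) :
    ∀ t ∈ I, deriv
        (fun s => (1 / (2 * a s)) * ((Wp s)^2 + (Wm s)^2)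
          + (1 / (8 * a s * s^2)) * ((Vp s)^2 + (Vm s)^2)
          + (μ s / a s) * (1 + k^2 * (v s)^2) / (1 - (v s)^2)) t =
      -(1/t) * ((1 / (2 * a t)) * (Wp t + Wm t)^2
          + (1 / (8 * a t * t^2)) * (Vp t - Vm t)^2
          + (μ t / a t) * (1 + k^2) / (1 - (v t)^2)) :=
  energy_identity_homogeneous_solutions_general k hk0 hk1 I hI0 Wp Wm Vp Vm a μ v ha hv hWp_diff
    hWm_diff hVp_diff hVm_diff ha_diff hμ_diff hv_diff hWp hWm hVp hVm ha' hfluid0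
end

section
/- For spatially independent solutions of the geometric ODE subsystem, the quantities h₁ and g₁ satisfy h₁' = (a_t/a) h₁ − 2k₁/t and g₁' = (a_t/a) g₁ − g₁/t, where k₁ := (t(W₊+W₋)−1)²/(4at²) + (V₊+V₋)²/(16at²). -/
/-!
With `ρ := a'/a`, the shifted unknowns `X± := t W± - 1/2` and `V±` satisfy
`X±' = ρ X± ± (W₊ - W₋)/2 + V₊V₋/(2t)` and `V±' = ρ V± + (V₊ + V₋)/(2t) - 2 W± V∓`:
the `μ̃`-source of the `W`-equation is exactly what absorbs the shift `-1/2` into `ρ X±`.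
Hence a form `Q` quadratic in `X±, V±` has `Q' = 2ρQ + R`, and
`(Q/(a t²))' = ρ Q/(a t²) + (R - 2Q/t)/(a t²)`; for `h₁` and `g₁` the last term is a
polynomial identity in `t, W±, V±`.
-/

section Rescaling

variable {w f : ℝ → ℝ} {w' g t : ℝ}

theorem hasDerivAt_of_deriv_inv_mul (hw : HasDerivAt w w' t) (hw0 : w t ≠ 0)
    (hf : DifferentiableAt ℝ f t) (h : deriv (fun s => (w s)⁻¹ * f s) t = g) :
    HasDerivAt f (w t * g + w' / w t * f t) t := by
  rw [((hw.fun_inv hw0).fun_mul hf.hasDerivAt).deriv] at h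
  refine hf.hasDerivAt.congr_deriv ?_
  rw [← h]
  field_simp
  ring

theorem HasDerivAt.div_mul_sq {Q : ℝ → ℝ} {Q' : ℝ} (hQ : HasDerivAt Q Q' t)
    (hw : HasDerivAt w w' t) (hw0 : w t ≠ 0) (ht : t ≠ 0) :
    HasDerivAt (fun s => Q s / (w s * s ^ 2))
      ((Q' - (w' / w t + 2 / t) * Q t) / (w t * t ^ 2)) t := by
  refine (hQ.fun_div (hw.fun_mul (hasDerivAt_id' t |>.fun_pow 2)) (by positivity)).congr_deriv ?_
  field_simp
  ring

end Rescaling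

section GeometricODE

variable {a W V μ : ℝ → ℝ} {a' c G t : ℝ}

theorem hasDerivAt_mul_sub_half_of_deriv_inv_mul (ha : HasDerivAt a a' t)
    (ha' : a' = -(a t) * t * μ t * c) (ha0 : a t ≠ 0) (hW : DifferentiableAt ℝ W t)
    (h : deriv (fun s => (a s)⁻¹ * s * W s) t = G + t * μ t / (2 * a t) * c) :
    HasDerivAt (fun s => s * W s - 1 / 2) (a t * G + a' / a t * (t * W t - 1 / 2)) t := by
  have hW' := hasDerivAt_of_deriv_inv_mul ha ha0 (differentiableAt_fun_id.fun_mul hW)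
    (by simpa only [← mul_assoc] using h)
  refine (hW'.sub_const (1 / 2)).congr_deriv ?_
  rw [ha']
  field_simp
  ring

theorem hasDerivAt_of_deriv_inv_mul_inv_mul (ha : HasDerivAt a a' t) (ha0 : a t ≠ 0)
    (ht : t ≠ 0) (hV : DifferentiableAt ℝ V t)
    (h : deriv (fun s => (a s)⁻¹ * s⁻¹ * V s) t = G) :
    HasDerivAt V (a t * t * G + (a' / a t + 1 / t) * V t) t := by
  refine (hasDerivAt_of_deriv_inv_mul (ha.fun_mul (hasDerivAt_id' t)) (mul_ne_zero ha0 ht) hV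
    (by simpa only [mul_inv] using h)).congr_deriv ?_
  field_simp

end GeometricODE

theorem h1_g1_balance_laws_general
    (k : ℝ)
    (I : Set ℝ) (hI0 : (0 : ℝ) ∉ I)
    (Wp Wm Vp Vm a μ : ℝ → ℝ)
    (ha : ∀ t ∈ I, 0 < a t)
    (hWp_diff : ∀ t ∈ I, DifferentiableAt ℝ Wp t)
    (hWm_diff : ∀ t ∈ I, DifferentiableAt ℝ Wm t)
    (hVp_diff : ∀ t ∈ I, DifferentiableAt ℝ Vp t)
    (hVm_diff : ∀ t ∈ I, DifferentiableAt ℝ Vm t)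
    (ha_diff : ∀ t ∈ I, DifferentiableAt ℝ a t)
    (hWp : ∀ t ∈ I, deriv (fun s => (a s)⁻¹ * s * Wp s) t =
      (Wp t - Wm t) / (2 * a t) + (Vp t * Vm t) / (2 * a t * t)
        + (t * μ t / (2 * a t)) * (1 - k^2))
    (hWm : ∀ t ∈ I, deriv (fun s => (a s)⁻¹ * s * Wm s) t =
      -((Wp t - Wm t) / (2 * a t)) + (Vp t * Vm t) / (2 * a t * t)
        + (t * μ t / (2 * a t)) * (1 - k^2))
    (hVp : ∀ t ∈ I, deriv (fun s => (a s)⁻¹ * s⁻¹ * Vp s) t =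
      -((Vp t - Vm t) / (2 * a t * t^2)) - (2 / (a t * t)) * Wp t * Vm t)
    (hVm : ∀ t ∈ I, deriv (fun s => (a s)⁻¹ * s⁻¹ * Vm s) t =
      (Vp t - Vm t) / (2 * a t * t^2) - (2 / (a t * t)) * Wm t * Vp t)
    (ha' : ∀ t ∈ I, deriv a t = -(a t) * t * μ t * (1 - k^2)) :
    ∀ t ∈ I,
      deriv (fun s => ((s*Wp s - 1/2)^2 + (s*Wm s - 1/2)^2) / (2 * a s * s^2)
          + ((Vp s)^2 + (Vm s)^2) / (8 * a s * s^2)) t =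
        (deriv a t / a t) *
          (((t*Wp t - 1/2)^2 + (t*Wm t - 1/2)^2) / (2 * a t * t^2)
            + ((Vp t)^2 + (Vm t)^2) / (8 * a t * t^2))
        - (2/t) * ((t*(Wp t + Wm t) - 1)^2 / (4 * a t * t^2)
            + (Vp t + Vm t)^2 / (16 * a t * t^2)) ∧
      deriv (fun s => ((s*Wp s - 1/2)^2 - (s*Wm s - 1/2)^2) / (2 * a s * s^2)
          + ((Vp s)^2 - (Vm s)^2) / (8 * a s * s^2)) t =
        (deriv a t / a t) *
          (((t*Wp t - 1/2)^2 - (t*Wm t - 1/2)^2) / (2 * a t * t^2)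
            + ((Vp t)^2 - (Vm t)^2) / (8 * a t * t^2))
        - (1/t) * (((t*Wp t - 1/2)^2 - (t*Wm t - 1/2)^2) / (2 * a t * t^2)
            + ((Vp t)^2 - (Vm t)^2) / (8 * a t * t^2)) := by
  intro t ht
  have ht0 : t ≠ 0 := fun h => hI0 (h ▸ ht)
  have ha0 : a t ≠ 0 := (ha t ht).ne'
  have hat := (ha_diff t ht).hasDerivAt
  have hXp := hasDerivAt_mul_sub_half_of_deriv_inv_mul hat (ha' t ht) ha0 (hWp_diff t ht) (hWp t ht)
  have hXm := hasDerivAt_mul_sub_half_of_deriv_inv_mul hat (ha' t ht) ha0 (hWm_diff t ht) (hWm t ht)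
  have hVp' := hasDerivAt_of_deriv_inv_mul_inv_mul hat ha0 ht0 (hVp_diff t ht) (hVp t ht)
  have hVm' := hasDerivAt_of_deriv_inv_mul_inv_mul hat ha0 ht0 (hVm_diff t ht) (hVm t ht)
  have hh₁ := ((((hXp.fun_pow 2).fun_add (hXm.fun_pow 2)).div_const 2).fun_add
    (((hVp'.fun_pow 2).fun_add (hVm'.fun_pow 2)).div_const 8)).div_mul_sq hat ha0 ht0
  have hg₁ := ((((hXp.fun_pow 2).fun_sub (hXm.fun_pow 2)).div_const 2).fun_add
    (((hVp'.fun_pow 2).fun_sub (hVm'.fun_pow 2)).div_const 8)).div_mul_sq hat ha0 ht0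
  constructor
  · refine ((hh₁.congr_of_eventuallyEq (.of_forall fun s => ?_)).congr_deriv ?_).deriv
    · ring
    · field_simp
      ring
  · refine ((hg₁.congr_of_eventuallyEq (.of_forall fun s => ?_)).congr_deriv ?_).deriv
    · ring
    · field_simp
      ring

/-- balance laws for the energy density h₁ and flux g₁ for
spatially independent solutions of the geometric ODE subsystem. -/
theorem h1_g1_balance_laws
    (k : ℝ) (hk0 : 0 < k) (hk1 : k < 1)
    (I : Set ℝ) (hI : IsOpen I) (hI0 : (0 : ℝ) ∉ I)
    (Wp Wm Vp Vm a μ : ℝ → ℝ)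
    (ha : ∀ t ∈ I, 0 < a t)
    (hμcont : ContinuousOn μ I)
    (hWp_diff : ∀ t ∈ I, DifferentiableAt ℝ Wp t)
    (hWm_diff : ∀ t ∈ I, DifferentiableAt ℝ Wm t)
    (hVp_diff : ∀ t ∈ I, DifferentiableAt ℝ Vp t)
    (hVm_diff : ∀ t ∈ I, DifferentiableAt ℝ Vm t)
    (ha_diff : ∀ t ∈ I, DifferentiableAt ℝ a t)
    (hWp : ∀ t ∈ I, deriv (fun s => (a s)⁻¹ * s * Wp s) t =
      (Wp t - Wm t) / (2 * a t) + (Vp t * Vm t) / (2 * a t * t)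
        + (t * μ t / (2 * a t)) * (1 - k^2))
    (hWm : ∀ t ∈ I, deriv (fun s => (a s)⁻¹ * s * Wm s) t =
      -((Wp t - Wm t) / (2 * a t)) + (Vp t * Vm t) / (2 * a t * t)
        + (t * μ t / (2 * a t)) * (1 - k^2))
    (hVp : ∀ t ∈ I, deriv (fun s => (a s)⁻¹ * s⁻¹ * Vp s) t =
      -((Vp t - Vm t) / (2 * a t * t^2)) - (2 / (a t * t)) * Wp t * Vm t)
    (hVm : ∀ t ∈ I, deriv (fun s => (a s)⁻¹ * s⁻¹ * Vm s) t =
      (Vp t - Vm t) / (2 * a t * t^2) - (2 / (a t * t)) * Wm t * Vp t)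
    (ha' : ∀ t ∈ I, deriv a t = -(a t) * t * μ t * (1 - k^2)) :
    ∀ t ∈ I,
      deriv (fun s => ((s*Wp s - 1/2)^2 + (s*Wm s - 1/2)^2) / (2 * a s * s^2)
          + ((Vp s)^2 + (Vm s)^2) / (8 * a s * s^2)) t =
        (deriv a t / a t) *
          (((t*Wp t - 1/2)^2 + (t*Wm t - 1/2)^2) / (2 * a t * t^2)
            + ((Vp t)^2 + (Vm t)^2) / (8 * a t * t^2))
        - (2/t) * ((t*(Wp t + Wm t) - 1)^2 / (4 * a t * t^2)
            + (Vp t + Vm t)^2 / (16 * a t * t^2)) ∧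
      deriv (fun s => ((s*Wp s - 1/2)^2 - (s*Wm s - 1/2)^2) / (2 * a s * s^2)
          + ((Vp s)^2 - (Vm s)^2) / (8 * a s * s^2)) t =
        (deriv a t / a t) *
          (((t*Wp t - 1/2)^2 - (t*Wm t - 1/2)^2) / (2 * a t * t^2)
            + ((Vp t)^2 - (Vm t)^2) / (8 * a t * t^2))
        - (1/t) * (((t*Wp t - 1/2)^2 - (t*Wm t - 1/2)^2) / (2 * a t * t^2)
            + ((Vp t)^2 - (Vm t)^2) / (8 * a t * t^2)) :=
  h1_g1_balance_laws_general k I hI0 Wp Wm Vp Vm a μ ha hWp_diff hWm_diff hVp_diff hVm_diff ha_diff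
    hWp hWm hVp hVm ha'
end
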